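/- arXiv:1709.07314 — 3 statements merged into one kernel-verified Lean document; each statement's English description precedes it below -/
import Mathlib

section
/- For EL concept expressions C and D, the subsumption C ⊑ D holds in every interpretation (i.e., C^I ⊆ D^I for every interpretation I) if and only if there is a homomorphism from the tree representation T_D to the tree representation T_C that maps the root of T_D to the root of T_C. -/
/-- EL concept expressions over concept names `C` and role names `R`. -/
inductive ELC (C R : Type) : Type where
  | top : ELC C R
  | cn : C → ELC C R
  | conj : ELC C R → ELC C R → ELC C R
  | ex : R → ELC C R → ELC C R

/-- An interpretation: a nonempty domain with interpretations of
concept and role names. -/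
structure Interp (C R : Type) where
  dom : Type
  inhab : Nonempty dom
  cname : C → Set dom
  rname : R → Set (dom × dom)

/-- Semantics of EL concept expressions. -/
def Interp.sem {C R : Type} (I : Interp C R) : ELC C R → Set I.dom
  | .top => Set.univ
  | .cn A => I.cname A
  | .conj c d => I.sem c ∩ I.sem d
  | .ex r c => {x | ∃ y, (x, y) ∈ I.rname r ∧ y ∈ I.sem c}

/-- The top-level existential successors of a concept: the children of the
root of its tree representation, with their edge labels. -/
def ELC.succs {C R : Type} : ELC C R → List (R × ELC C R)
  | .top => []
  | .cn _ => []
  | .conj c d => c.succs ++ d.succs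
  | .ex r c => [(r, c)]

/-- The concept names labelling the root of the tree representation. -/
def ELC.topNames {C R : Type} : ELC C R → List C
  | .top => []
  | .cn A => [A]
  | .conj c d => c.topNames ++ d.topNames
  | .ex _ _ => []

/-- The subconcept sitting at a given position (sequence of child indices)
of the tree representation of `c`. -/
def subtreeAt {C R : Type} : ELC C R → List ℕ → Option (ELC C R)
  | c, [] => some c
  | c, i :: p =>
    match c.succs[i]? with
    | some rd => subtreeAt rd.2 p
    | none => none

/-- The tree representation `T_C` of a concept `c`, presented as an
interpretation: nodes are the valid positions in the tree of `c`, a node is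
labelled by (i.e. belongs to) the concept names labelling it, and edges go
from a node to its children with the corresponding role label. -/
def treeNode {C R : Type} (c : ELC C R) : Type :=
  {p : List ℕ // (subtreeAt c p).isSome}

def treeInterp {C R : Type} (c : ELC C R) : Interp C R where
  dom := treeNode c
  inhab := ⟨⟨[], rfl⟩⟩
  cname A := {p | ∃ d, subtreeAt c p.1 = some d ∧ A ∈ d.topNames}
  rname r := {q | ∃ i, q.2.1 = q.1.1 ++ [i] ∧
      ∃ d, subtreeAt c q.1.1 = some d ∧ ∃ e, d.succs[i]? = some (r, e)}

/-- The root of the tree representation. -/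
def treeRoot {C R : Type} (c : ELC C R) : treeNode c :=
  ⟨[], rfl⟩

/-- A homomorphism from the labelled tree `T_C` (viewed as an interpretation)
to an interpretation: `A ∈ l(d)` implies `h d ∈ A^I`, and an `r`-labelled
edge `(d,d')` implies `(h d, h d') ∈ r^I`. -/
def IsHom {C R : Type} (I J : Interp C R) (h : I.dom → J.dom) : Prop :=
  (∀ A x, x ∈ I.cname A → h x ∈ J.cname A) ∧
  ∀ r x y, (x, y) ∈ I.rname r → (h x, h y) ∈ J.rname r

/-!
A concept `e` holds at `x` exactly when `x` carries the root labels of `e` and has, for every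
top-level successor `(r, e')` of `e`, an `r`-successor satisfying `e'`. Hence every homomorphism
from `T_e` into `I` sends the root into `e^I`, and conversely an element of `e^I` can be unfolded,
choosing successor witnesses along each path, into such a homomorphism. The tree `T_c` itself
satisfies `c` at its root (via the identity), so `c ⊑ d` yields a homomorphism `T_d → T_c`;
conversely, such a homomorphism composed with the unfolding of `x ∈ c^I` puts `x` into `d^I`.
-/

variable {C R : Type}

lemma subtreeAt_append (c : ELC C R) (p q : List ℕ) :
    subtreeAt c (p ++ q) = (subtreeAt c p).bind (subtreeAt · q) := by
  induction p generalizing c with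
  | nil => rfl
  | cons i p ih =>
    cases h : c.succs[i]? with
    | none => simp [subtreeAt, h]
    | some rd => simp [subtreeAt, h, ih]

lemma subtreeAt_cons_eq_some {c e : ELC C R} {i : ℕ} {p : List ℕ}
    (h : subtreeAt c (i :: p) = some e) :
    ∃ r c', c.succs[i]? = some (r, c') ∧ subtreeAt c' p = some e := by
  cases hi : c.succs[i]? with
  | none => simp [subtreeAt, hi] at h
  | some rc => exact ⟨rc.1, rc.2, rfl, by simpa [subtreeAt, hi] using h⟩

namespace Interp

variable (I : Interp C R)

lemma mem_sem_iff (e : ELC C R) (x : I.dom) :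
    x ∈ I.sem e ↔ (∀ A ∈ e.topNames, x ∈ I.cname A) ∧
      ∀ re ∈ e.succs, ∃ y, (x, y) ∈ I.rname re.1 ∧ y ∈ I.sem re.2 := by
  induction e with
  | top => simp [sem, ELC.topNames, ELC.succs]
  | cn A => simp [sem, ELC.topNames, ELC.succs]
  | conj c d ihc ihd =>
    simp only [sem, ELC.topNames, ELC.succs, Set.mem_inter_iff, ihc, ihd, List.mem_append,
      or_imp, forall_and]
    tauto
  | ex r c => simp [sem, ELC.topNames, ELC.succs]

noncomputable def witness (r : R) (e : ELC C R) (x : I.dom) : I.dom :=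
  @Classical.epsilon I.dom I.inhab fun y => (x, y) ∈ I.rname r ∧ y ∈ I.sem e

lemma witness_spec {e e' : ELC C R} {r : R} {x : I.dom} (hx : x ∈ I.sem e)
    (he : (r, e') ∈ e.succs) :
    (x, I.witness r e' x) ∈ I.rname r ∧ I.witness r e' x ∈ I.sem e' :=
  Classical.epsilon_spec_aux I.inhab _ (((I.mem_sem_iff e x).1 hx).2 _ he)

noncomputable def unfold : List ℕ → ELC C R → I.dom → I.dom
  | [], _, x => x
  | i :: p, e, x =>
    match e.succs[i]? with
    | some (r, e') => unfold p e' (I.witness r e' x)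
    | none => x

lemma unfold_append {e e' : ELC C R} {p : List ℕ} (hp : subtreeAt e p = some e')
    (q : List ℕ) (x : I.dom) :
    I.unfold (p ++ q) e x = I.unfold q e' (I.unfold p e x) := by
  induction p generalizing e x with
  | nil => cases hp; rfl
  | cons i p ih =>
    obtain ⟨r, e₀, hi, hp⟩ := subtreeAt_cons_eq_some hp
    simp only [List.cons_append, unfold, hi, ih hp]

lemma unfold_mem_sem {e e' : ELC C R} {p : List ℕ} (hp : subtreeAt e p = some e')
    {x : I.dom} (hx : x ∈ I.sem e) : I.unfold p e x ∈ I.sem e' := by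
  induction p generalizing e x with
  | nil => cases hp; exact hx
  | cons i p ih =>
    obtain ⟨r, e₀, hi, hp⟩ := subtreeAt_cons_eq_some hp
    simp only [unfold, hi]
    exact ih hp (I.witness_spec hx (List.mem_of_getElem? hi)).2

lemma unfold_rname {e e' e'' : ELC C R} {p : List ℕ} (hp : subtreeAt e p = some e')
    {i : ℕ} {r : R} (hi : e'.succs[i]? = some (r, e'')) {x : I.dom} (hx : x ∈ I.sem e) :
    (I.unfold p e x, I.unfold (p ++ [i]) e x) ∈ I.rname r := by
  rw [I.unfold_append hp]
  simpa only [unfold, hi] using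
    (I.witness_spec (I.unfold_mem_sem hp hx) (List.mem_of_getElem? hi)).1

end Interp

lemma IsHom.id (I : Interp C R) : IsHom I I id :=
  ⟨fun _ _ h => h, fun _ _ _ h => h⟩

lemma IsHom.comp {I J K : Interp C R} {g : J.dom → K.dom} {h : I.dom → J.dom}
    (hg : IsHom J K g) (hh : IsHom I J h) : IsHom I K (g ∘ h) :=
  ⟨fun A x hx => hg.1 A _ (hh.1 A x hx), fun r x y hxy => hg.2 r _ _ (hh.2 r x y hxy)⟩

lemma exists_isHom_treeInterp_of_mem_sem {d : ELC C R} {I : Interp C R} {x : I.dom}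
    (hx : x ∈ I.sem d) :
    ∃ g : (treeInterp d).dom → I.dom, IsHom (treeInterp d) I g ∧ g (treeRoot d) = x := by
  refine ⟨fun q => I.unfold q.1 d x, ⟨?_, ?_⟩, rfl⟩
  · rintro A q ⟨e, he, hA⟩
    exact ((I.mem_sem_iff e _).1 (I.unfold_mem_sem he hx)).1 A hA
  · rintro r q q' ⟨i, hq', e, he, e', hi⟩
    change (I.unfold q.1 d x, I.unfold q'.1 d x) ∈ I.rname r
    rw [hq']
    exact I.unfold_rname he hi hx

namespace IsHom

variable {c : ELC C R} {I : Interp C R} {h : (treeInterp c).dom → I.dom}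

/-- Induction on `e` needs the weaker hypothesis that the labels and successors of `e` occur at
the node `q`, since the conjuncts of a node's concept are not themselves subtrees. -/
lemma mem_sem_of_subset (hh : IsHom (treeInterp c) I h) (e : ELC C R) {q : treeNode c}
    {e' : ELC C R} (hq : subtreeAt c q.1 = some e') (hN : e.topNames ⊆ e'.topNames)
    (hS : e.succs ⊆ e'.succs) : h q ∈ I.sem e := by
  induction e generalizing q e' with
  | top => trivial
  | cn A => exact hh.1 A q ⟨e', hq, hN (List.mem_singleton_self A)⟩
  | conj e₁ e₂ ih₁ ih₂ =>
    simp only [ELC.topNames, ELC.succs, List.append_subset] at hN hS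
    exact ⟨ih₁ hq hN.1 hS.1, ih₂ hq hN.2 hS.2⟩
  | ex r e₁ ih =>
    obtain ⟨i, hi⟩ := List.mem_iff_getElem?.1 (hS (List.mem_singleton_self (r, e₁)))
    have hchild : subtreeAt c (q.1 ++ [i]) = some e₁ := by
      simp [subtreeAt_append, hq, subtreeAt, hi]
    let q' : treeNode c := ⟨q.1 ++ [i], by simp [hchild]⟩
    exact ⟨h q', hh.2 r q q' ⟨i, rfl, e', hq, e₁, hi⟩,
      ih (q := q') hchild (List.Subset.refl _) (List.Subset.refl _)⟩

lemma root_mem_sem (hh : IsHom (treeInterp c) I h) : h (treeRoot c) ∈ I.sem c :=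
  hh.mem_sem_of_subset c rfl (List.Subset.refl _) (List.Subset.refl _)

end IsHom

/-- `C ⊑ D` holds in every interpretation iff there is a
homomorphism from the tree representation `T_D` to the tree representation
`T_C` mapping the root of `T_D` to the root of `T_C`. -/
theorem subsumption_iff_tree_hom {C R : Type} (c d : ELC C R) :
    (∀ I : Interp C R, I.sem c ⊆ I.sem d) ↔
      ∃ h : (treeInterp d).dom → (treeInterp c).dom,
        IsHom (treeInterp d) (treeInterp c) h ∧ h (treeRoot d) = treeRoot c := by
  constructor
  · intro hsub
    exact exists_isHom_treeInterp_of_mem_sem (hsub _ (IsHom.id (treeInterp c)).root_mem_sem)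
  · rintro ⟨h, hh, hroot⟩ I x hx
    obtain ⟨g, hg, hgroot⟩ := exists_isHom_treeInterp_of_mem_sem hx
    have hd : g (h (treeRoot d)) ∈ I.sem d := (hg.comp hh).root_mem_sem
    rwa [hroot, hgroot] at hd
end

section
/- If C' is obtained from an EL concept expression C by parent/child merging (choosing nodes d, d', d'' in the tree of C such that d is an r-successor of d' and d'' is an r⁻-successor of d, then removing d'', adding the label of d'' to the label of d', and reattaching all successors of d'' to d'), then C' ⊑ C holds in every interpretation (∅ ⊨ C' ⊑ C). -/
/-- Roles: role names and inverse roles. -/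
inductive Role (R : Type) : Type where
  | nm : R → Role R
  | inv : R → Role R

/-- The inverse of a role, identifying `(r⁻)⁻` with `r`. -/
def Role.opp {R : Type} : Role R → Role R
  | .nm r => .inv r
  | .inv r => .nm r

/-- Semantics of roles; an inverse role denotes the converse relation. -/
def Interp.roleSem {C R : Type} (I : Interp C R) : Role R → Set (I.dom × I.dom)
  | .nm r => I.rname r
  | .inv r => {p | (p.2, p.1) ∈ I.rname r}

/-- Semantics of concept expressions whose existential restrictions use
roles (role names or inverse roles). -/
def Interp.semI {C R : Type} (I : Interp C R) : ELC C (Role R) → Set I.dom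
  | .top => Set.univ
  | .cn A => I.cname A
  | .conj c d => I.semI c ∩ I.semI d
  | .ex ρ c => {x | ∃ y, (x, y) ∈ I.roleSem ρ ∧ y ∈ I.semI c}

/-- `Split X G X'` holds when `G` is (an occurrence of) a top-level conjunct
of `X` and `X'` is `X` with that occurrence removed (the remainder being `⊤`
when `G` is all of `X`). -/
inductive Split {C R : Type} : ELC C R → ELC C R → ELC C R → Prop where
  | base (c : ELC C R) : Split c c .top
  | left {a g a' : ELC C R} (b : ELC C R) : Split a g a' → Split (.conj a b) g (.conj a' b)
  | right {b g b' : ELC C R} (a : ELC C R) : Split b g b' → Split (.conj a b) g (.conj a b')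

/-- `PCMerge X X'`: `X'` is obtained from `X` by parent/child merging.
At some node `d'` of the tree of `X` (reached through the congruence rules)
there is an `ρ`-successor `d` (a top-level conjunct `∃ρ.D`), and `d` has an
`ρ⁻`-successor `d''` (a top-level conjunct `∃ρ⁻.F` of `D`).  The node `d''`
is removed, its label is added to the label of `d'`, and its successors are
reattached to `d'`; i.e. the conjunct `∃ρ.D` is replaced by `∃ρ.D' ⊓ F`,
where `D'` is `D` without the conjunct `∃ρ⁻.F`. -/
inductive PCMerge {C R : Type} : ELC C (Role R) → ELC C (Role R) → Prop where
  | here {X X' D D' F : ELC C (Role R)} {ρ : Role R} :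
      Split X (.ex ρ D) X' → Split D (.ex ρ.opp F) D' →
      PCMerge X (.conj (.conj X' (.ex ρ D')) F)
  | conjL {a a' : ELC C (Role R)} (b : ELC C (Role R)) :
      PCMerge a a' → PCMerge (.conj a b) (.conj a' b)
  | conjR {b b' : ELC C (Role R)} (a : ELC C (Role R)) :
      PCMerge b b' → PCMerge (.conj a b) (.conj a b')
  | under {a a' : ELC C (Role R)} (ρ : Role R) :
      PCMerge a a' → PCMerge (.ex ρ a) (.ex ρ a')


namespace Interp

variable {C R : Type} (I : Interp C R)

theorem mem_roleSem_opp {ρ : Role R} {x y : I.dom} :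
    (y, x) ∈ I.roleSem ρ.opp ↔ (x, y) ∈ I.roleSem ρ := by
  cases ρ <;> rfl

theorem semI_eq_inter_of_split {X G X' : ELC C (Role R)} (h : Split X G X') :
    I.semI X = I.semI G ∩ I.semI X' := by
  induction h with
  | base => exact (Set.inter_univ _).symm
  | left _ _ ih => simp only [semI, ih, Set.inter_assoc]
  | right _ _ ih => simp only [semI, ih, Set.inter_left_comm]

/-- The `ρ`-successor `y` witnessing `∃ρ.D'` at `x` has `x` itself as a `ρ⁻`-successor. -/
theorem semI_ex_inter_subset_of_split {ρ : Role R} {D D' F : ELC C (Role R)}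
    (hD : Split D (.ex ρ.opp F) D') :
    I.semI (.ex ρ D') ∩ I.semI F ⊆ I.semI (.ex ρ D) := by
  rintro x ⟨⟨y, hxy, hy⟩, hx⟩
  refine ⟨y, hxy, ?_⟩
  rw [I.semI_eq_inter_of_split hD]
  exact ⟨⟨x, I.mem_roleSem_opp.mpr hxy, hx⟩, hy⟩

theorem semI_ex_mono (ρ : Role R) {a a' : ELC C (Role R)} (h : I.semI a' ⊆ I.semI a) :
    I.semI (.ex ρ a') ⊆ I.semI (.ex ρ a) := by
  rintro x ⟨y, hxy, hy⟩
  exact ⟨y, hxy, h hy⟩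

end Interp

/-- if `C'` is obtained from `C` by parent/child merging,
then `∅ ⊨ C' ⊑ C`, i.e. `C'^I ⊆ C^I` for every interpretation `I`. -/
theorem pcMerge_subsumes {C R : Type} (c c' : ELC C (Role R))
    (h : PCMerge c c') (I : Interp C R) :
    I.semI c' ⊆ I.semI c := by
  induction h with
  | here hX hD =>
    rw [I.semI_eq_inter_of_split hX]
    rintro x ⟨⟨hX', hD'⟩, hF⟩
    exact ⟨I.semI_ex_inter_subset_of_split hD ⟨hD', hF⟩, hX'⟩
  | conjL _ _ ih => exact Set.inter_subset_inter_left _ ih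
  | conjR _ _ ih => exact Set.inter_subset_inter_right _ ih
  | under ρ _ ih => exact I.semI_ex_mono ρ ih
end

section
/- For any TBox T (finite set of concept inclusions and role inclusions) and roles r, s: T entails r ⊑ s if and only if there exists a finite sequence of roles r_0, ..., r_n with r_0 = r, r_n = s, and for every i < n either r_i ⊑ r_{i+1} ∈ T or r_i⁻ ⊑ r_{i+1}⁻ ∈ T. -/
/-- A TBox: a finite set (list) of concept inclusions between concept
expressions (with roles, possibly inverse, in existential restrictions)
and role inclusions between roles. -/
structure TBox (C R : Type) where
  cis : List (ELC C (Role R) × ELC C (Role R))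
  ris : List (Role R × Role R)

/-- `I` is a model of the TBox `T`. -/
def Interp.model {C R : Type} (I : Interp C R) (T : TBox C R) : Prop :=
  (∀ p ∈ T.cis, I.semI p.1 ⊆ I.semI p.2) ∧
  ∀ p ∈ T.ris, I.roleSem p.1 ⊆ I.roleSem p.2

/-- `T ⊨ ρ ⊑ σ`: the role inclusion holds in every model of `T`. -/
def TBox.entailsRI {C R : Type} (T : TBox C R) (ρ σ : Role R) : Prop :=
  ∀ I : Interp C R, I.model T → I.roleSem ρ ⊆ I.roleSem σ

/-
A chain of told role inclusions is sound because a model of `T` satisfies each link, read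
directly or, for `r_i⁻ ⊑ r_{i+1}⁻`, after taking converses. Conversely, if `s` is not
reachable from `r` by such links, take the two-point interpretation on `Bool` in which every
role contains the diagonal (so every concept denotes everything and all concept inclusions
hold), `ρ` contains the edge `(false, true)` iff `ρ` is reachable from `r`, and `(true, false)`
iff `ρ⁻` is. Reachability is closed under the told inclusions and under inverting both sides,
so this is a model of `T`; it contains `(false, true)` in `r` but not in `s`.
-/

namespace Relation

theorem reflTransGen_iff_exists_fin_chain {α : Type*} {r : α → α → Prop} {a b : α} :
    ReflTransGen r a b ↔ ∃ (n : ℕ) (g : Fin (n + 1) → α), g 0 = a ∧ g (Fin.last n) = b ∧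
      ∀ i : Fin n, r (g i.castSucc) (g i.succ) := by
  constructor
  · intro h
    induction h using ReflTransGen.head_induction_on with
    | refl => exact ⟨0, fun _ => b, rfl, rfl, Fin.elim0⟩
    | @head a c hac _ ih =>
      obtain ⟨n, g, hg0, hglast, hg⟩ := ih
      refine ⟨n + 1, Fin.cons a g, rfl, by rwa [← Fin.succ_last, Fin.cons_succ], ?_⟩
      refine Fin.cases (by simpa [hg0] using hac) fun i => ?_
      simpa [← Fin.succ_castSucc] using hg i
  · rintro ⟨n, g, rfl, rfl, hg⟩
    induction n with
    | zero => exact .refl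
    | succ n ih =>
      refine .head (hg 0) ?_
      simpa [Fin.tail] using ih (Fin.tail g) fun i => by
        simpa [Fin.tail, ← Fin.succ_castSucc] using hg i.succ

end Relation

open Relation

@[simp]
theorem Role.opp_opp {R : Type} (ρ : Role R) : ρ.opp.opp = ρ := by
  cases ρ <;> rfl

theorem Interp.mem_roleSem_opp_s6 {C R : Type} (I : Interp C R) (ρ : Role R) (p : I.dom × I.dom) :
    p ∈ I.roleSem ρ.opp ↔ p.swap ∈ I.roleSem ρ := by
  cases ρ <;> rfl

namespace TBox

variable {C R : Type} (T : TBox C R)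

def RIStep (ρ σ : Role R) : Prop :=
  (ρ, σ) ∈ T.ris ∨ (ρ.opp, σ.opp) ∈ T.ris

variable {T}

theorem RIStep.opp {ρ σ : Role R} (h : T.RIStep ρ σ) : T.RIStep ρ.opp σ.opp := by
  rcases h with h | h
  · exact .inr (by simpa using h)
  · exact .inl h

theorem reflTransGen_riStep_opp {ρ σ : Role R} (h : ReflTransGen T.RIStep ρ σ) :
    ReflTransGen T.RIStep ρ.opp σ.opp := by
  induction h with
  | refl => exact .refl
  | tail _ hστ ih => exact ih.tail hστ.opp

end TBox

namespace Interp.model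

variable {C R : Type} {T : TBox C R} {I : Interp C R}

theorem roleSem_subset_of_riStep (hI : I.model T) {ρ σ : Role R} (h : T.RIStep ρ σ) :
    I.roleSem ρ ⊆ I.roleSem σ := by
  rcases h with h | h
  · exact hI.2 _ h
  · intro p hp
    have hswap : p.swap ∈ I.roleSem σ.opp :=
      hI.2 _ h ((I.mem_roleSem_opp_s6 ρ p.swap).2 hp)
    exact (I.mem_roleSem_opp_s6 σ p.swap).1 hswap

theorem roleSem_subset_of_reflTransGen (hI : I.model T) {ρ σ : Role R}
    (h : ReflTransGen T.RIStep ρ σ) : I.roleSem ρ ⊆ I.roleSem σ := by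
  induction h with
  | refl => exact subset_rfl
  | tail _ hστ ih => exact ih.trans (hI.roleSem_subset_of_riStep hστ)

end Interp.model

namespace TBox

variable {C R : Type} (T : TBox C R) (r : Role R)

def reachRel (ρ : Role R) : Set (Bool × Bool) :=
  {p | p.1 = p.2 ∨ (ReflTransGen T.RIStep r ρ ∧ p = (false, true)) ∨
    (ReflTransGen T.RIStep r ρ.opp ∧ p = (true, false))}

theorem mem_reachRel_opp (ρ : Role R) (p : Bool × Bool) :
    p ∈ T.reachRel r ρ.opp ↔ p.swap ∈ T.reachRel r ρ := by
  obtain ⟨x, y⟩ := p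
  simp only [reachRel, Set.mem_ofPred_eq, Role.opp_opp, Prod.swap_prod_mk, Prod.mk.injEq]
  grind

def reachModel : Interp C R where
  dom := Bool
  inhab := ⟨true⟩
  cname _ := Set.univ
  rname a := T.reachRel r (.nm a)

theorem roleSem_reachModel (ρ : Role R) : (T.reachModel r).roleSem ρ = T.reachRel r ρ := by
  cases ρ with
  | nm a => rfl
  | inv a =>
    ext p
    exact (T.mem_reachRel_opp r (.nm a) p).symm

theorem semI_reachModel (c : ELC C (Role R)) : (T.reachModel r).semI c = Set.univ := by
  induction c with
  | top | cn => rfl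
  | conj c d ihc ihd => simp [Interp.semI, ihc, ihd]
  | ex ρ c ih =>
    refine Set.eq_univ_of_forall fun x => ⟨x, ?_, by simp [ih]⟩
    rw [roleSem_reachModel]
    exact .inl rfl

theorem reachModel_model : (T.reachModel r).model T := by
  refine ⟨fun p _ => by rw [semI_reachModel, semI_reachModel], fun p hp => ?_⟩
  rw [roleSem_reachModel, roleSem_reachModel]
  have hstep : T.RIStep p.1 p.2 := .inl hp
  rintro q (hdiag | ⟨hreach, rfl⟩ | ⟨hreach, rfl⟩)
  · exact .inl hdiag
  · exact .inr (.inl ⟨hreach.tail hstep, rfl⟩)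
  · exact .inr (.inr ⟨hreach.tail hstep.opp, rfl⟩)

variable {T r}

theorem reflTransGen_of_entailsRI {s : Role R} (h : T.entailsRI r s) :
    ReflTransGen T.RIStep r s := by
  have hr : ((false, true) : Bool × Bool) ∈ (T.reachModel r).roleSem r := by
    rw [roleSem_reachModel]
    exact .inr (.inl ⟨.refl, rfl⟩)
  have hs := h _ (T.reachModel_model r) hr
  rw [roleSem_reachModel] at hs
  rcases hs with hdiag | ⟨hreach, -⟩ | ⟨-, hedge⟩
  · simp at hdiag
  · exact hreach
  · simp at hedge

theorem entailsRI_iff_reflTransGen {s : Role R} :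
    T.entailsRI r s ↔ ReflTransGen T.RIStep r s :=
  ⟨reflTransGen_of_entailsRI, fun h _ hI => hI.roleSem_subset_of_reflTransGen h⟩

end TBox

/-- `T ⊨ r ⊑ s` iff there is a finite sequence of roles
`r_0, …, r_n` with `r_0 = r`, `r_n = s`, and for every `i < n` either
`r_i ⊑ r_{i+1} ∈ T` or `r_i⁻ ⊑ r_{i+1}⁻ ∈ T`. -/
theorem entailsRI_iff_chain {C R : Type} (T : TBox C R) (r s : Role R) :
    T.entailsRI r s ↔
      ∃ (n : ℕ) (g : Fin (n + 1) → Role R), g 0 = r ∧ g (Fin.last n) = s ∧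
        ∀ i : Fin n, (g i.castSucc, g i.succ) ∈ T.ris ∨
          ((g i.castSucc).opp, (g i.succ).opp) ∈ T.ris :=
  TBox.entailsRI_iff_reflTransGen.trans reflTransGen_iff_exists_fin_chain
end
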